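/- Let N ≥ 1, X a real normed space, C ⊆ X a nonempty bounded convex subset with diameter at most M for some M > 0, T_1,…,T_N : C → C nonexpansive mappings extended cyclically by T_n := T_{((n−1) mod N)+1}, λ_n = 1/(n+1) for n ≥ 1, u ∈ C, and let (x_n) be the iteration x_0 = u, x_{n+1} = T_{n+1}(λ_{n+1}·u + (1 − λ_{n+1})·x_n). Then for every ε > 0 and every n ≥ Ψ(ε) := 4^(⌈8M(N+1)/ε⌉+2), both ‖x_n − x_{n+N}‖ ≤ ε and ‖x_n − T_{n+N}⋯T_{n+1}x_n‖ ≤ ε. -/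

import Mathlib

/-- `iterComp T n N z` is the composition `T (n+N) (T (n+N-1) (⋯ (T (n+1) z)))`. -/
def iterComp {Y : Type*} (T : ℕ → Y → Y) (n : ℕ) : ℕ → Y → Y
  | 0, z => z
  | (k + 1), z => T (n + k + 1) (iterComp T n k z)

/-! Write `d n = ‖x (n + N) - x n‖`. Since the maps repeat with period `N`, the points
`x (n + N + 1)` and `x (n + 1)` are images under the same nonexpansive map, which gives
`(n + N + 2) d (n + 1) ≤ (n + N + 1) d n + N M / (n + 2)` and hence, summing the harmonic
increments, `(n + N + 1) d n ≤ M (N + 1) (1 + log (n + 1))`. Dropping the anchor in each of the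
`N` steps from `x n` to `x (n + N)` moves the point by at most `λ M ≤ M / (n + 2)`, so
`x (n + N)` is also within `N M / (n + 2)` of `T (n + N) ⋯ T (n + 1) (x n)`. Both quantities are
thus at most `M (N + 1) (2 + log t) / t` with `t = n + 1`, and `log t ≤ 2 √t - 2` makes this
at most `ε` once `√t ≥ 2 ^ (⌈8 M (N + 1) / ε⌉₊ + 2)`. -/

open Real Set Finset

section Cyclic

variable {α : Type*} {N : ℕ} {T : ℕ → α}

theorem prop_succ_of_cyclic (hN : 1 ≤ N) (hcyc : ∀ n, 1 ≤ n → T n = T ((n - 1) % N + 1))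
    {P : α → Prop} (hP : ∀ i, 1 ≤ i → i ≤ N → P (T i)) (m : ℕ) : P (T (m + 1)) := by
  rw [hcyc (m + 1) (by omega), Nat.add_sub_cancel]
  exact hP _ (by omega) (by have := Nat.mod_lt m (by omega : 0 < N); omega)

theorem periodic_succ_of_cyclic (hcyc : ∀ n, 1 ≤ n → T n = T ((n - 1) % N + 1)) :
    Function.Periodic (fun m ↦ T (m + 1)) N := by
  intro m
  show T (m + N + 1) = T (m + 1)
  rw [hcyc (m + N + 1) (by omega), hcyc (m + 1) (by omega), Nat.add_sub_cancel,
    Nat.add_sub_cancel, Nat.add_mod_right]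

end Cyclic

theorem iterComp_mem {Y : Type*} {T : ℕ → Y → Y} {s : Set Y}
    (hTmap : ∀ m, MapsTo (T (m + 1)) s s) (m : ℕ) {z : Y} (hz : z ∈ s) : ∀ k, iterComp T m k z ∈ s
  | 0 => hz
  | k + 1 => hTmap (m + k) (iterComp_mem hTmap m hz k)

section Halpern

variable {X : Type*} [NormedAddCommGroup X] [NormedSpace ℝ X]

theorem norm_convexCombo_sub_convexCombo_le (u p q : X) {a : ℝ} (b : ℝ) (ha : a ≤ 1) :
    ‖(a • u + (1 - a) • p) - (b • u + (1 - b) • q)‖ ≤ (1 - a) * ‖p - q‖ + |b - a| * ‖q - u‖ := by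
  have hsplit : (a • u + (1 - a) • p) - (b • u + (1 - b) • q)
      = (1 - a) • (p - q) + (b - a) • (q - u) := by module
  rw [hsplit]
  refine (norm_add_le _ _).trans_eq ?_
  rw [norm_smul, norm_smul, Real.norm_of_nonneg (by linarith), Real.norm_eq_abs]

theorem norm_convexCombo_sub_le (u y z : X) {a : ℝ} (ha : 0 ≤ a) :
    ‖(a • u + (1 - a) • y) - z‖ ≤ a * ‖u - y‖ + ‖y - z‖ := by
  have hsplit : (a • u + (1 - a) • y) - z = a • (u - y) + (y - z) := by module
  rw [hsplit]
  refine (norm_add_le _ _).trans_eq ?_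
  rw [norm_smul, Real.norm_of_nonneg ha]

variable {C : Set X} {T : ℕ → X → X} {lam : ℕ → ℝ} {u : X} {x : ℕ → X}

theorem halpern_mem (hC : Convex ℝ C) (hTmap : ∀ m, MapsTo (T (m + 1)) C C)
    (hlam0 : ∀ m, 0 ≤ lam (m + 1)) (hlam1 : ∀ m, lam (m + 1) ≤ 1) (hu : u ∈ C) (hx0 : x 0 = u)
    (hx : ∀ n, x (n + 1) = T (n + 1) (lam (n + 1) • u + (1 - lam (n + 1)) • x n)) :
    ∀ n, x n ∈ C
  | 0 => hx0 ▸ hu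
  | n + 1 => hx n ▸ hTmap n (hC hu (halpern_mem hC hTmap hlam0 hlam1 hu hx0 hx n) (hlam0 n)
      (sub_nonneg.2 (hlam1 n)) (add_sub_cancel _ _))

theorem halpern_norm_sub_period_succ_le {N : ℕ} {M : ℝ}
    (hdiam : ∀ y ∈ C, ∀ z ∈ C, ‖y - z‖ ≤ M) (hT : ∀ m, LipschitzOnWith 1 (T (m + 1)) C)
    (hper : Function.Periodic (fun m ↦ T (m + 1)) N) (hlam1 : ∀ m, lam (m + 1) ≤ 1)
    (hhalp : ∀ m, lam (m + 1) • u + (1 - lam (m + 1)) • x m ∈ C) (hu : u ∈ C) (hxC : ∀ n, x n ∈ C)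
    (hx : ∀ n, x (n + 1) = T (n + 1) (lam (n + 1) • u + (1 - lam (n + 1)) • x n)) (m : ℕ) :
    ‖x (m + N + 1) - x (m + 1)‖ ≤
      (1 - lam (m + N + 1)) * ‖x (m + N) - x m‖ + |lam (m + 1) - lam (m + N + 1)| * M := by
  rw [hx, hx, show T (m + N + 1) = T (m + 1) from hper m]
  calc _ ≤ ‖(lam (m + N + 1) • u + (1 - lam (m + N + 1)) • x (m + N)) -
          (lam (m + 1) • u + (1 - lam (m + 1)) • x m)‖ := by
        simpa using (hT m).norm_sub_le (hhalp (m + N)) (hhalp m)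
    _ ≤ _ := norm_convexCombo_sub_convexCombo_le _ _ _ _ (hlam1 _)
    _ ≤ _ := by
        gcongr
        exact hdiam _ (hxC m) _ hu

theorem halpern_norm_sub_iterComp_le {M : ℝ}
    (hdiam : ∀ y ∈ C, ∀ z ∈ C, ‖y - z‖ ≤ M) (hTmap : ∀ m, MapsTo (T (m + 1)) C C)
    (hT : ∀ m, LipschitzOnWith 1 (T (m + 1)) C) (hlam0 : ∀ m, 0 ≤ lam (m + 1))
    (hhalp : ∀ m, lam (m + 1) • u + (1 - lam (m + 1)) • x m ∈ C) (hu : u ∈ C) (hxC : ∀ n, x n ∈ C)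
    (hx : ∀ n, x (n + 1) = T (n + 1) (lam (n + 1) • u + (1 - lam (n + 1)) • x n)) (m : ℕ) :
    ∀ k, ‖x (m + k) - iterComp T m k (x m)‖ ≤ (∑ j ∈ range k, lam (m + j + 1)) * M
  | 0 => by simp [iterComp]
  | k + 1 => by
    have ih := halpern_norm_sub_iterComp_le hdiam hTmap hT hlam0 hhalp hu hxC hx m k
    rw [← add_assoc, hx, iterComp, sum_range_succ, add_mul]
    calc _ ≤ ‖(lam (m + k + 1) • u + (1 - lam (m + k + 1)) • x (m + k)) -
            iterComp T m k (x m)‖ := by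
          simpa using (hT (m + k)).norm_sub_le (hhalp (m + k)) (iterComp_mem hTmap m (hxC m) k)
      _ ≤ _ := norm_convexCombo_sub_le _ _ _ (hlam0 _)
      _ ≤ _ := by
          rw [add_comm]
          gcongr
          · exact hlam0 _
          · exact hdiam _ hu _ (hxC _)

end Halpern

theorem le_mul_one_add_log_of_le_add_div {a : ℕ → ℝ} {c : ℝ} (hc : 0 ≤ c) (h0 : a 0 ≤ c)
    (hstep : ∀ m, a (m + 1) ≤ a m + c / (m + 2)) : ∀ m, a m ≤ c * (1 + log (m + 1))
  | 0 => by simpa using h0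
  | m + 1 => by
    have ih := le_mul_one_add_log_of_le_add_div hc h0 hstep m
    -- `1 - x⁻¹ ≤ log x` at `x = (m + 2) / (m + 1)`
    have hlog : 1 / ((m : ℝ) + 2) ≤ log (m + 2) - log (m + 1) := by
      have := one_sub_inv_le_log_of_pos (x := ((m : ℝ) + 2) / (m + 1)) (by positivity)
      rw [log_div (by positivity) (by positivity), inv_div] at this
      convert this using 1
      field_simp
      ring
    calc a (m + 1) ≤ c * (1 + log (m + 1)) + c * (1 / (m + 2)) := by
          rw [mul_one_div]; linarith [hstep m]
      _ ≤ c * (1 + log (m + 1)) + c * (log (m + 2) - log (m + 1)) := by gcongr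
      _ = c * (1 + log ((m + 1 : ℕ) + 1)) := by push_cast; ring_nf

theorem two_add_log_le_two_mul_sqrt {t : ℝ} (ht : 0 < t) : 2 + log t ≤ 2 * √t := by
  have := log_le_sub_one_of_pos (sqrt_pos.2 ht)
  rw [log_sqrt ht.le] at this
  linarith

theorem two_mul_div_two_pow_ceil_le {A ε : ℝ} (hA : 0 ≤ A) (hε : 0 < ε) :
    2 * A / 2 ^ (⌈8 * A / ε⌉₊ + 2) ≤ ε := by
  set K := ⌈8 * A / ε⌉₊
  have hK : 8 * A ≤ ε * K := by
    rw [← div_le_iff₀' hε]; exact Nat.le_ceil _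
  have hpow : (K : ℝ) ≤ 2 ^ K := by exact_mod_cast Nat.lt_two_pow_self.le
  rw [div_le_iff₀ (by positivity), pow_add]
  nlinarith [mul_le_mul_of_nonneg_left hpow hε.le]

theorem mul_two_add_log_div_le {A ε t : ℝ} (hA : 0 ≤ A) (hε : 0 < ε)
    (ht : 4 ^ (⌈8 * A / ε⌉₊ + 2) ≤ t) : A * (2 + log t) / t ≤ ε := by
  set K := ⌈8 * A / ε⌉₊
  have ht0 : 0 < t := lt_of_lt_of_le (by positivity) ht
  have hsqrt : (2 : ℝ) ^ (K + 2) ≤ √t := by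
    rw [le_sqrt (by positivity) ht0.le, ← pow_mul, pow_mul']
    norm_num [ht]
  calc A * (2 + log t) / t ≤ A * (2 * √t) / t := by
        gcongr; exact two_add_log_le_two_mul_sqrt ht0
    _ = 2 * A / √t := by
        field_simp
        rw [sq_sqrt ht0.le]
    _ ≤ 2 * A / 2 ^ (K + 2) := by gcongr
    _ ≤ ε := two_mul_div_two_pow_ceil_le hA hε

section HarmonicHalpern

variable {X : Type*} [NormedAddCommGroup X] [NormedSpace ℝ X]
  {C : Set X} {T : ℕ → X → X} {lam : ℕ → ℝ} {u : X} {x : ℕ → X} {N : ℕ} {M : ℝ}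

theorem one_div_nat_add_two_le_one (m : ℕ) : 1 / ((m : ℝ) + 2) ≤ 1 := by
  rw [div_le_one (by positivity)]; linarith [(m.cast_nonneg : (0 : ℝ) ≤ m)]

theorem harmonic_halpern_norm_sub_period_le (hM : 0 ≤ M)
    (hdiam : ∀ y ∈ C, ∀ z ∈ C, ‖y - z‖ ≤ M) (hT : ∀ m, LipschitzOnWith 1 (T (m + 1)) C)
    (hper : Function.Periodic (fun m ↦ T (m + 1)) N) (hlam : ∀ m : ℕ, lam (m + 1) = 1 / (m + 2))
    (hhalp : ∀ m, lam (m + 1) • u + (1 - lam (m + 1)) • x m ∈ C) (hu : u ∈ C) (hxC : ∀ n, x n ∈ C)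
    (hx : ∀ n, x (n + 1) = T (n + 1) (lam (n + 1) • u + (1 - lam (n + 1)) • x n)) (n : ℕ) :
    (n + N + 1) * ‖x (n + N) - x n‖ ≤ M * (N + 1) * (1 + log (n + 1)) := by
  refine le_mul_one_add_log_of_le_add_div (a := fun m ↦ (m + N + 1) * ‖x (m + N) - x m‖)
    (by positivity) ?_ (fun m ↦ ?_) n
  · simp only [Nat.cast_zero, zero_add]
    rw [mul_comm]
    exact mul_le_mul_of_nonneg_right (hdiam _ (hxC N) _ (hxC 0)) (by positivity)
  have hlam1 : ∀ m, lam (m + 1) ≤ 1 := fun m ↦ (hlam m).trans_le (one_div_nat_add_two_le_one m)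
  have hstep := halpern_norm_sub_period_succ_le hdiam hT hper hlam1 hhalp hu hxC hx m
  have hgap : 0 ≤ 1 / ((m : ℝ) + 2) - 1 / (m + N + 2) := by
    rw [sub_nonneg]; gcongr; linarith [(N.cast_nonneg : (0 : ℝ) ≤ N)]
  rw [hlam, hlam, Nat.cast_add, abs_of_nonneg hgap] at hstep
  simp only [Nat.cast_add_one, Nat.add_right_comm m 1 N]
  calc ((m : ℝ) + 1 + N + 1) * ‖x (m + N + 1) - x (m + 1)‖
      ≤ (m + N + 2) * ((1 - 1 / (m + N + 2)) * ‖x (m + N) - x m‖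
          + (1 / (m + 2) - 1 / (m + N + 2)) * M) := by
        rw [show (m : ℝ) + 1 + N + 1 = m + N + 2 by ring]; gcongr
    _ = (m + N + 1) * ‖x (m + N) - x m‖ + N * M / (m + 2) := by field_simp; ring
    _ ≤ (m + N + 1) * ‖x (m + N) - x m‖ + M * (N + 1) / (m + 2) := by
        gcongr _ + ?_ / _; nlinarith

theorem harmonic_halpern_regularity (hC : Convex ℝ C) (hM : 0 ≤ M)
    (hdiam : ∀ y ∈ C, ∀ z ∈ C, ‖y - z‖ ≤ M) (hTmap : ∀ m, MapsTo (T (m + 1)) C C)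
    (hT : ∀ m, LipschitzOnWith 1 (T (m + 1)) C) (hper : Function.Periodic (fun m ↦ T (m + 1)) N)
    (hlam : ∀ m : ℕ, lam (m + 1) = 1 / (m + 2)) (hu : u ∈ C) (hx0 : x 0 = u)
    (hx : ∀ n, x (n + 1) = T (n + 1) (lam (n + 1) • u + (1 - lam (n + 1)) • x n)) (n : ℕ) :
    ‖x n - x (n + N)‖ ≤ M * (N + 1) * (2 + log (n + 1)) / (n + 1) ∧
      ‖x n - iterComp T n N (x n)‖ ≤ M * (N + 1) * (2 + log (n + 1)) / (n + 1) := by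
  have hlam0 : ∀ m, 0 ≤ lam (m + 1) := fun m ↦ by rw [hlam]; positivity
  have hlam1 : ∀ m, lam (m + 1) ≤ 1 := fun m ↦ (hlam m).trans_le (one_div_nat_add_two_le_one m)
  have hxC := halpern_mem hC hTmap hlam0 hlam1 hu hx0 hx
  have hhalp : ∀ m, lam (m + 1) • u + (1 - lam (m + 1)) • x m ∈ C := fun m ↦
    hC hu (hxC m) (hlam0 m) (sub_nonneg.2 (hlam1 m)) (add_sub_cancel _ _)
  have hperiod : ‖x n - x (n + N)‖ ≤ M * (N + 1) * (1 + log (n + 1)) / (n + 1) := by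
    rw [norm_sub_rev, le_div_iff₀ (by positivity)]
    refine le_trans ?_
      (harmonic_halpern_norm_sub_period_le hM hdiam hT hper hlam hhalp hu hxC hx n)
    rw [mul_comm]; gcongr; linarith
  have hweights : (∑ j ∈ range N, lam (n + j + 1)) * M ≤ M * (N + 1) / (n + 1) := by
    have hle : ∀ j ∈ range N, lam (n + j + 1) ≤ 1 / (n + 1) := fun j _ ↦ by
      rw [hlam]; push_cast; gcongr <;> linarith [(j.cast_nonneg : (0 : ℝ) ≤ j)]
    calc (∑ j ∈ range N, lam (n + j + 1)) * M ≤ (N * (1 / (n + 1))) * M := by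
          gcongr; simpa using sum_le_card_nsmul _ _ _ hle
      _ ≤ M * (N + 1) / (n + 1) := by
          rw [mul_one_div, div_mul_eq_mul_div, mul_comm]; gcongr; linarith
  refine ⟨hperiod.trans (by gcongr; norm_num), ?_⟩
  calc ‖x n - iterComp T n N (x n)‖
      ≤ ‖x n - x (n + N)‖ + ‖x (n + N) - iterComp T n N (x n)‖ :=
        norm_sub_le_norm_sub_add_norm_sub _ _ _
    _ ≤ M * (N + 1) * (1 + log (n + 1)) / (n + 1) + M * (N + 1) / (n + 1) :=
        add_le_add hperiod
          ((halpern_norm_sub_iterComp_le hdiam hTmap hT hlam0 hhalp hu hxC hx n N).trans hweights)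
    _ = M * (N + 1) * (2 + log (n + 1)) / (n + 1) := by ring

end HarmonicHalpern

theorem stmt_8_general {X : Type*} [NormedAddCommGroup X] [NormedSpace ℝ X]
    (N : ℕ) (hN : 1 ≤ N) (C : Set X) (hC : Convex ℝ C)
    (M : ℝ) (hdiam : ∀ x ∈ C, ∀ y ∈ C, ‖x - y‖ ≤ M)
    (T : ℕ → X → X)
    (hTmap : ∀ i, 1 ≤ i → i ≤ N → Set.MapsTo (T i) C C)
    (hTne : ∀ i, 1 ≤ i → i ≤ N → ∀ x ∈ C, ∀ y ∈ C, ‖T i x - T i y‖ ≤ ‖x - y‖)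
    (hcyc : ∀ n, 1 ≤ n → T n = T ((n - 1) % N + 1))
    (lam : ℕ → ℝ) (hlam : ∀ n, 1 ≤ n → lam n = 1 / (n + 1))
    (u : X) (hu : u ∈ C) (x : ℕ → X) (hx0 : x 0 = u)
    (hx : ∀ n : ℕ, x (n + 1) = T (n + 1) (lam (n + 1) • u + (1 - lam (n + 1)) • x n)) :
    ∀ ε : ℝ, 0 < ε → ∀ n : ℕ, 4 ^ (⌈8 * M * (N + 1) / ε⌉₊ + 2) ≤ n →
      ‖x n - x (n + N)‖ ≤ ε ∧ ‖x n - iterComp T n N (x n)‖ ≤ ε := by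
  intro ε hε n hn
  have hM : 0 ≤ M := by simpa using hdiam u hu u hu
  have hT : ∀ m, LipschitzOnWith 1 (T (m + 1)) C :=
    prop_succ_of_cyclic (P := fun f ↦ LipschitzOnWith 1 f C) hN hcyc fun i hi hiN ↦
      lipschitzOnWith_iff_norm_sub_le.2 (by simpa using hTne i hi hiN)
  have hlam' : ∀ m : ℕ, lam (m + 1) = 1 / (m + 2) := fun m ↦ by
    rw [hlam _ le_add_self]; push_cast; ring
  have hrate : M * (N + 1) * (2 + log (n + 1)) / (n + 1) ≤ ε := by
    refine mul_two_add_log_div_le (by positivity) hε ?_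
    rw [← mul_assoc]
    exact (show (4 : ℝ) ^ _ ≤ n by exact_mod_cast hn).trans (le_add_of_nonneg_right zero_le_one)
  obtain ⟨hperiod, hcomp⟩ := harmonic_halpern_regularity hC hM hdiam
    (prop_succ_of_cyclic (P := (MapsTo · C C)) hN hcyc hTmap) hT (periodic_succ_of_cyclic hcyc)
    hlam' hu hx0 hx n
  exact ⟨hperiod.trans hrate, hcomp.trans hrate⟩

/-- Rate of asymptotic regularity `Ψ(ε) = 4^(⌈8M(N+1)/ε⌉+2)` for the cyclic
iteration with `λ_n = 1/(n+1)` on a nonempty bounded convex set of diameter at most `M`. -/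
theorem stmt_8 {X : Type*} [NormedAddCommGroup X] [NormedSpace ℝ X]
    (N : ℕ) (hN : 1 ≤ N) (C : Set X) (hCne : C.Nonempty) (hC : Convex ℝ C)
    (M : ℝ) (hM : 0 < M) (hdiam : ∀ x ∈ C, ∀ y ∈ C, ‖x - y‖ ≤ M)
    (T : ℕ → X → X)
    (hTmap : ∀ i, 1 ≤ i → i ≤ N → Set.MapsTo (T i) C C)
    (hTne : ∀ i, 1 ≤ i → i ≤ N → ∀ x ∈ C, ∀ y ∈ C, ‖T i x - T i y‖ ≤ ‖x - y‖)
    (hcyc : ∀ n, 1 ≤ n → T n = T ((n - 1) % N + 1))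
    (lam : ℕ → ℝ) (hlam : ∀ n, 1 ≤ n → lam n = 1 / (n + 1))
    (u : X) (hu : u ∈ C) (x : ℕ → X) (hx0 : x 0 = u)
    (hx : ∀ n : ℕ, x (n + 1) = T (n + 1) (lam (n + 1) • u + (1 - lam (n + 1)) • x n)) :
    ∀ ε : ℝ, 0 < ε → ∀ n : ℕ, 4 ^ (⌈8 * M * (N + 1) / ε⌉₊ + 2) ≤ n →
      ‖x n - x (n + N)‖ ≤ ε ∧ ‖x n - iterComp T n N (x n)‖ ≤ ε :=
  stmt_8_general N hN C hC M hdiam T hTmap hTne hcyc lam hlam u hu x hx0 hx
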